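/- Let β ∈ [0,1), λ = 1−β, let m ≥ 2 be an integer, and let n satisfy Assumption 1 with δ* < (m−1)λ. Define M^stoch(t) = (1/a_t)∫_0^t n_τ·μ_m(t−τ) dτ, where μ_m(u) = (1−β S_u^{−1})(S_u−1)·Σ_{j=1}^∞ j^m S_u^{−j} is the m-th moment of the birth–death process, and the deterministic approximation M^det(t) = (1/a_t)∫_0^t n_τ·e^{mλ(t−τ)} dτ. Then M^stoch(t)/M^det(t) − m!/λ^{m−1} = O(e^{−λt}) as t → ∞. -/

import Mathlib

open Filter Real intervalIntegral Asymptotics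

/-- Assumption 1 on the wild-type growth function `n`. -/
def Assumption1 (n : ℝ → ℝ) : Prop :=
  (∀ τ : ℝ, τ < 0 → n τ = 0) ∧
  ContinuousOn n (Set.Ioi 0) ∧
  Filter.Tendsto n (nhdsWithin 0 (Set.Ioi 0)) (nhds (n 0)) ∧
  (∀ τ : ℝ, 0 < τ → 0 < n τ) ∧
  MonotoneOn n (Set.Ioi 0) ∧
  (∀ x : ℝ, 0 ≤ x → ∃ L : ℝ, 0 < L ∧
    Filter.Tendsto (fun t : ℝ => n (t - x) / n t) Filter.atTop (nhds L))

/-- `S u = (1 - β e^{-λu})/(1 - e^{-λu})` with `λ = 1 - β`. -/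
noncomputable def birthDeathS (β u : ℝ) : ℝ :=
  (1 - β * Real.exp (-(1 - β) * u)) / (1 - Real.exp (-(1 - β) * u))

/-- The `m`-th moment of the birth–death process:
`E(Z_u^m) = (1 − β S_u⁻¹)(S_u − 1) Σ_{j≥1} j^m S_u^{−j}`. -/
noncomputable def birthDeathMoment (β : ℝ) (m : ℕ) (u : ℝ) : ℝ :=
  (1 - β * (birthDeathS β u)⁻¹) * (birthDeathS β u - 1) *
    ∑' j : ℕ, (j : ℝ) ^ m * ((birthDeathS β u)⁻¹) ^ j

/-
Conditioned on survival, the birth–death process at time `u` is geometric with parameter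
`x = S_u⁻¹`, so its `m`-th moment is the survival probability `1 - β x` times a geometric
moment. Bounding `j ^ m` between `m! C(j, m)` and `m! C(j + m - 1, m)` and summing against
`∑ᵢ C(i + m, m) xⁱ = (1 - x)^{-(m+1)}` sandwiches the moment between
`D e^{mλu} (1 - e^{-λu})^{m-1}` and `D e^{mλu}`, where `D = m! / λ^{m-1}`; by Bernoulli it is
`D e^{mλu} + O(e^{(m-1)λu})`. Convolving with `n`, the error is `e^{(m-1)λt}` times
`∫₀ᵗ n_τ e^{-(m-1)λτ} dτ`, which stays bounded because `n` grows at rate `δ* < (m-1)λ`, while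
the denominator is `e^{mλt}` times a quantity bounded away from zero.
-/

open MeasureTheory Nat

theorem tsum_pow_mul_geometric_le {x : ℝ} (hx0 : 0 ≤ x) (hx1 : x < 1) {m : ℕ} (hm : m ≠ 0) :
    ∑' j : ℕ, (j : ℝ) ^ m * x ^ j ≤ m ! * x / (1 - x) ^ (m + 1) := by
  have hx : ‖x‖ < 1 := by rwa [norm_of_nonneg hx0]
  have hsum := summable_pow_mul_geometric_of_norm_lt_one m hx
  -- `(i + 1) ^ m ≤ (i + m)(i + m - 1)⋯(i + 1) = m! * C(i + m, m)`
  have hterm (i : ℕ) :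
      ((i + 1 : ℕ) : ℝ) ^ m * x ^ (i + 1) ≤ m ! * x * ((i + m).choose m * x ^ i) := by
    have h := pow_sub_le_descFactorial (i + m) m
    rw [descFactorial_eq_factorial_mul_choose, show i + m + 1 - m = i + 1 by omega] at h
    have h' : ((i + 1 : ℕ) : ℝ) ^ m ≤ ((m ! * (i + m).choose m : ℕ) : ℝ) := by exact_mod_cast h
    calc ((i + 1 : ℕ) : ℝ) ^ m * x ^ (i + 1)
        ≤ ((m ! * (i + m).choose m : ℕ) : ℝ) * x ^ (i + 1) := by gcongr
      _ = m ! * x * ((i + m).choose m * x ^ i) := by push_cast; ring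
  calc ∑' j : ℕ, (j : ℝ) ^ m * x ^ j = ∑' i : ℕ, ((i + 1 : ℕ) : ℝ) ^ m * x ^ (i + 1) := by
        rw [hsum.tsum_eq_zero_add]
        simp [hm]
    _ ≤ ∑' i : ℕ, m ! * x * ((i + m).choose m * x ^ i) :=
        ((summable_nat_add_iff (f := fun j : ℕ => (j : ℝ) ^ m * x ^ j) 1).2 hsum).tsum_le_tsum
          hterm ((summable_choose_mul_geometric_of_norm_lt_one m hx).mul_left _)
    _ = m ! * x / (1 - x) ^ (m + 1) := by
        rw [tsum_mul_left, tsum_choose_mul_geometric_of_norm_lt_one m hx]; ring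

theorem le_tsum_pow_mul_geometric {x : ℝ} (hx0 : 0 ≤ x) (hx1 : x < 1) (m : ℕ) :
    m ! * x ^ m / (1 - x) ^ (m + 1) ≤ ∑' j : ℕ, (j : ℝ) ^ m * x ^ j := by
  have hx : ‖x‖ < 1 := by rwa [norm_of_nonneg hx0]
  -- `m! * C(i + m, m) = (i + m)(i + m - 1)⋯(i + 1) ≤ (i + m) ^ m`
  have hterm (i : ℕ) :
      m ! * x ^ m * ((i + m).choose m * x ^ i) ≤ ((i + m : ℕ) : ℝ) ^ m * x ^ (i + m) := by
    have h := descFactorial_le_pow (i + m) m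
    rw [descFactorial_eq_factorial_mul_choose] at h
    have h' : ((m ! * (i + m).choose m : ℕ) : ℝ) ≤ ((i + m : ℕ) : ℝ) ^ m := by exact_mod_cast h
    calc m ! * x ^ m * ((i + m).choose m * x ^ i)
        = ((m ! * (i + m).choose m : ℕ) : ℝ) * x ^ (i + m) := by push_cast; ring
      _ ≤ ((i + m : ℕ) : ℝ) ^ m * x ^ (i + m) := by gcongr
  calc m ! * x ^ m / (1 - x) ^ (m + 1)
      = ∑' i : ℕ, m ! * x ^ m * ((i + m).choose m * x ^ i) := by
        rw [tsum_mul_left, tsum_choose_mul_geometric_of_norm_lt_one m hx]; ring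
    _ ≤ ∑' j : ℕ, (j : ℝ) ^ m * x ^ j :=
        ((summable_choose_mul_geometric_of_norm_lt_one m hx).mul_left _).tsum_le_tsum_of_inj
          (· + m) (add_left_injective m) (fun j _ => by positivity) hterm
          (summable_pow_mul_geometric_of_norm_lt_one m hx)

theorem continuousAt_tsum_pow_mul_geometric (m : ℕ) {y : ℝ} (hy : |y| < 1) :
    ContinuousAt (fun z : ℝ => ∑' j : ℕ, (j : ℝ) ^ m * z ^ j) y := by
  obtain ⟨r, hyr, hr1⟩ := exists_between hy
  have hr0 : 0 ≤ r := (abs_nonneg y).trans hyr.le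
  have hcont : ContinuousOn (fun z : ℝ => ∑' j : ℕ, (j : ℝ) ^ m * z ^ j) (Set.Icc (-r) r) :=
    continuousOn_tsum (fun j => by fun_prop)
      (summable_pow_mul_geometric_of_norm_lt_one m (by rwa [norm_of_nonneg hr0]))
      fun j z hz => by
        rw [norm_mul, norm_pow, norm_pow, Real.norm_natCast, norm_eq_abs]
        gcongr
        exact abs_le.2 hz
  exact hcont.continuousAt
    (Icc_mem_nhds (by linarith [neg_abs_le y]) (by linarith [le_abs_self y]))

-- The `m`-th moment of the geometric law `P(J = j) = (1 - x) x ^ (j - 1)` on `{1, 2, …}`.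
noncomputable def geometricMoment (m : ℕ) (x : ℝ) : ℝ :=
  (x⁻¹ - 1) * ∑' j : ℕ, (j : ℝ) ^ m * x ^ j

theorem geometricMoment_le {x : ℝ} (hx0 : 0 < x) (hx1 : x < 1) {m : ℕ} (hm : m ≠ 0) :
    geometricMoment m x ≤ m ! / (1 - x) ^ m := by
  have h1x : 0 < 1 - x := by linarith
  calc geometricMoment m x ≤ (x⁻¹ - 1) * (m ! * x / (1 - x) ^ (m + 1)) :=
        mul_le_mul_of_nonneg_left (tsum_pow_mul_geometric_le hx0.le hx1 hm)
          (sub_nonneg.2 ((one_le_inv₀ hx0).2 hx1.le))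
    _ = m ! / (1 - x) ^ m := by field_simp; ring

theorem le_geometricMoment {x : ℝ} (hx0 : 0 < x) (hx1 : x < 1) {m : ℕ} (hm : m ≠ 0) :
    m ! * x ^ (m - 1) / (1 - x) ^ m ≤ geometricMoment m x := by
  have h1x : 0 < 1 - x := by linarith
  obtain ⟨k, rfl⟩ := exists_eq_add_one_of_ne_zero hm
  calc (k + 1) ! * x ^ (k + 1 - 1) / (1 - x) ^ (k + 1)
      = (x⁻¹ - 1) * ((k + 1) ! * x ^ (k + 1) / (1 - x) ^ (k + 1 + 1)) := by
        rw [Nat.add_sub_cancel]; field_simp; ring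
    _ ≤ geometricMoment (k + 1) x :=
        mul_le_mul_of_nonneg_left (le_tsum_pow_mul_geometric hx0.le hx1 _)
          (sub_nonneg.2 ((one_le_inv₀ hx0).2 hx1.le))

theorem continuousAt_geometricMoment (m : ℕ) {x : ℝ} (hx0 : 0 < x) (hx1 : x < 1) :
    ContinuousAt (geometricMoment m) x :=
  ((continuousAt_inv₀ hx0.ne').sub continuousAt_const).mul
    (continuousAt_tsum_pow_mul_geometric m (by rwa [abs_of_pos hx0]))

theorem birthDeathMoment_eq_mul_geometricMoment (β : ℝ) (m : ℕ) (u : ℝ) :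
    birthDeathMoment β m u =
      (1 - β * (birthDeathS β u)⁻¹) * geometricMoment m (birthDeathS β u)⁻¹ := by
  rw [birthDeathMoment, geometricMoment, inv_inv, mul_assoc]

theorem exp_neg_mul_mem_Ioo {c u : ℝ} (hc : 0 < c) (hu : 0 < u) :
    exp (-c * u) ∈ Set.Ioo 0 1 :=
  ⟨exp_pos _, exp_lt_one_iff.2 (by nlinarith)⟩

theorem birthDeathS_inv_mem_Ioo {β u : ℝ} (hβ0 : 0 ≤ β) (hβ1 : β < 1) (hu : 0 < u) :
    (birthDeathS β u)⁻¹ ∈ Set.Ioo 0 1 := by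
  obtain ⟨hq0, hq1⟩ := exp_neg_mul_mem_Ioo (sub_pos.2 hβ1) hu
  have hβq : 0 < 1 - β * exp (-(1 - β) * u) := by nlinarith
  rw [birthDeathS, inv_div]
  exact ⟨div_pos (by linarith) hβq, (div_lt_one hβq).2 (by nlinarith)⟩

theorem continuousOn_birthDeathMoment {β : ℝ} (hβ0 : 0 ≤ β) (hβ1 : β < 1) (m : ℕ) :
    ContinuousOn (birthDeathMoment β m) (Set.Ioi 0) := by
  have hinv : ContinuousOn (fun u => (birthDeathS β u)⁻¹) (Set.Ioi 0) := by
    simp_rw [birthDeathS, inv_div]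
    refine ContinuousOn.div (by fun_prop) (by fun_prop) fun u hu => ?_
    obtain ⟨hq0, hq1⟩ := exp_neg_mul_mem_Ioo (sub_pos.2 hβ1) hu
    nlinarith
  simp_rw [funext (birthDeathMoment_eq_mul_geometricMoment β m)]
  refine (continuousOn_const.sub (continuousOn_const.mul hinv)).mul fun u hu => ?_
  obtain ⟨hx0, hx1⟩ := birthDeathS_inv_mem_Ioo hβ0 hβ1 hu
  exact ContinuousAt.comp_continuousWithinAt (f := fun u => (birthDeathS β u)⁻¹)
    (continuousAt_geometricMoment m hx0 hx1) (hinv u hu)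

theorem birthDeathMoment_mem_Icc {β : ℝ} (hβ0 : 0 ≤ β) (hβ1 : β < 1) {m : ℕ} (hm : m ≠ 0)
    {u : ℝ} (hu : 0 < u) :
    birthDeathMoment β m u ∈ Set.Icc
      (m ! / (1 - β) ^ (m - 1) * exp (m * (1 - β) * u) * (1 - exp (-(1 - β) * u)) ^ (m - 1))
      (m ! / (1 - β) ^ (m - 1) * exp (m * (1 - β) * u) *
        (1 - β * exp (-(1 - β) * u)) ^ (m - 1)) := by
  obtain ⟨hx0, hx1⟩ := birthDeathS_inv_mem_Ioo hβ0 hβ1 hu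
  obtain ⟨hq0, hq1⟩ := exp_neg_mul_mem_Ioo (sub_pos.2 hβ1) hu
  have hexp : exp (m * (1 - β) * u) = (exp (-(1 - β) * u) ^ m)⁻¹ := by
    rw [← exp_nat_mul, ← exp_neg]; ring_nf
  rw [birthDeathMoment_eq_mul_geometricMoment, hexp]
  set q := exp (-(1 - β) * u)
  set x := (birthDeathS β u)⁻¹
  have hx : x = (1 - q) / (1 - β * q) := inv_div _ _
  have hlam : 1 - β ≠ 0 := (sub_pos.2 hβ1).ne'
  have hβq : 1 - β * q ≠ 0 := by nlinarith
  have h1x : 1 - x = (1 - β) * q / (1 - β * q) := by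
    rw [hx, one_sub_div hβq]; ring
  have hsurv : 1 - β * x = (1 - β) / (1 - β * q) := by
    rw [hx, mul_div_assoc', one_sub_div hβq]; ring
  have hsurv0 : 0 ≤ 1 - β * x := by nlinarith
  clear_value x q
  obtain ⟨k, rfl⟩ := exists_eq_add_one_of_ne_zero hm
  constructor
  · calc _ = (1 - β * x) * ((k + 1) ! * x ^ (k + 1 - 1) / (1 - x) ^ (k + 1)) := by
          rw [h1x, hsurv, hx, Nat.add_sub_cancel, div_pow, div_pow, mul_pow]
          field_simp
          ring
      _ ≤ _ := mul_le_mul_of_nonneg_left (le_geometricMoment hx0 hx1 hm) hsurv0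
  · calc _ ≤ (1 - β * x) * ((k + 1) ! / (1 - x) ^ (k + 1)) :=
          mul_le_mul_of_nonneg_left (geometricMoment_le hx0 hx1 hm) hsurv0
      _ = _ := by
          rw [h1x, hsurv, Nat.add_sub_cancel, div_pow, mul_pow]
          field_simp
          ring

theorem birthDeathMoment_nonneg {β : ℝ} (hβ0 : 0 ≤ β) (hβ1 : β < 1) {m : ℕ} (hm : m ≠ 0)
    {u : ℝ} (hu : 0 < u) : 0 ≤ birthDeathMoment β m u := by
  refine le_trans ?_ (birthDeathMoment_mem_Icc hβ0 hβ1 hm hu).1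
  have hlam : 0 < 1 - β := sub_pos.2 hβ1
  have h1q : 0 ≤ 1 - exp (-(1 - β) * u) :=
    sub_nonneg.2 (exp_neg_mul_mem_Ioo hlam hu).2.le
  positivity

theorem birthDeathMoment_le {β : ℝ} (hβ0 : 0 ≤ β) (hβ1 : β < 1) {m : ℕ} (hm : m ≠ 0)
    {u : ℝ} (hu : 0 < u) :
    birthDeathMoment β m u ≤ m ! / (1 - β) ^ (m - 1) * exp (m * (1 - β) * u) := by
  have hlam : 0 < 1 - β := sub_pos.2 hβ1
  obtain ⟨hq0, hq1⟩ := exp_neg_mul_mem_Ioo hlam hu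
  refine (birthDeathMoment_mem_Icc hβ0 hβ1 hm hu).2.trans (mul_le_of_le_one_right ?_ ?_)
  · positivity
  · exact pow_le_one₀ (by nlinarith) (by nlinarith)

theorem abs_birthDeathMoment_sub_le {β : ℝ} (hβ0 : 0 ≤ β) (hβ1 : β < 1) {m : ℕ} (hm : m ≠ 0)
    {u : ℝ} (hu : 0 < u) :
    |birthDeathMoment β m u - m ! / (1 - β) ^ (m - 1) * exp (m * (1 - β) * u)| ≤
      m ! / (1 - β) ^ (m - 1) * (m - 1) * exp ((m - 1) * (1 - β) * u) := by
  have hlam : 0 < 1 - β := sub_pos.2 hβ1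
  obtain ⟨hq0, hq1⟩ := exp_neg_mul_mem_Ioo hlam hu
  have hm1 : (0 : ℝ) ≤ m - 1 := by
    have : (1 : ℝ) ≤ m := by exact_mod_cast one_le_iff_ne_zero.2 hm
    linarith
  have hbernoulli : 1 - (m - 1) * exp (-(1 - β) * u) ≤ (1 - exp (-(1 - β) * u)) ^ (m - 1) := by
    have h := one_add_mul_le_pow (a := -exp (-(1 - β) * u)) (by linarith) (m - 1)
    rwa [Nat.cast_pred (pos_of_ne_zero hm), mul_neg, ← sub_eq_add_neg, ← sub_eq_add_neg] at h
  have hshift : exp (m * (1 - β) * u) * exp (-(1 - β) * u) = exp ((m - 1) * (1 - β) * u) := by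
    rw [← exp_add]; ring_nf
  have hlow := (birthDeathMoment_mem_Icc hβ0 hβ1 hm hu).1
  have hup := birthDeathMoment_le hβ0 hβ1 hm hu
  rw [abs_sub_le_iff]
  constructor
  · have : 0 ≤ m ! / (1 - β) ^ (m - 1) * (m - 1) * exp ((m - 1) * (1 - β) * u) := by positivity
    linarith
  · calc m ! / (1 - β) ^ (m - 1) * exp (m * (1 - β) * u) - birthDeathMoment β m u
        ≤ m ! / (1 - β) ^ (m - 1) * exp (m * (1 - β) * u) *
            (1 - (1 - exp (-(1 - β) * u)) ^ (m - 1)) := by linarith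
      _ ≤ m ! / (1 - β) ^ (m - 1) * exp (m * (1 - β) * u) *
            ((m - 1) * exp (-(1 - β) * u)) := by gcongr; linarith
      _ = _ := by rw [← hshift]; ring

theorem intervalIntegrable_mul_birthDeathMoment {β : ℝ} (hβ0 : 0 ≤ β) (hβ1 : β < 1) {m : ℕ}
    (hm : m ≠ 0) {n : ℝ → ℝ} (hn : ContinuousOn n (Set.Ici 0)) (hn0 : ∀ τ, 0 ≤ n τ) {t : ℝ}
    (ht : 0 ≤ t) :
    IntervalIntegrable (fun τ => n τ * birthDeathMoment β m (t - τ)) volume 0 t := by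
  have hnt : ContinuousOn n (Set.Icc 0 t) := hn.mono Set.Icc_subset_Ici_self
  have hmajorant : IntegrableOn
      (fun τ => n τ * (m ! / (1 - β) ^ (m - 1) * exp (m * (1 - β) * (t - τ)))) (Set.Icc 0 t) :=
    (hnt.mul (by fun_prop)).integrableOn_Icc
  have hmeas : ContinuousOn (fun τ => n τ * birthDeathMoment β m (t - τ)) (Set.Ioo 0 t) :=
    (hnt.mono Set.Ioo_subset_Icc_self).mul <|
      (continuousOn_birthDeathMoment hβ0 hβ1 m).comp (by fun_prop) fun τ hτ => sub_pos.2 hτ.2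
  rw [intervalIntegrable_iff_integrableOn_Ioo_of_le ht]
  refine (hmajorant.mono_set Set.Ioo_subset_Icc_self).mono'
    (hmeas.aestronglyMeasurable measurableSet_Ioo) ?_
  filter_upwards [ae_restrict_mem measurableSet_Ioo] with τ hτ
  have hu : 0 < t - τ := sub_pos.2 hτ.2
  rw [norm_of_nonneg (mul_nonneg (hn0 τ) (birthDeathMoment_nonneg hβ0 hβ1 hm hu))]
  exact mul_le_mul_of_nonneg_left (birthDeathMoment_le hβ0 hβ1 hm hu) (hn0 τ)

theorem abs_integral_mul_birthDeathMoment_sub_le {β : ℝ} (hβ0 : 0 ≤ β) (hβ1 : β < 1) {m : ℕ}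
    (hm : m ≠ 0) {n : ℝ → ℝ} (hn : ContinuousOn n (Set.Ici 0)) (hn0 : ∀ τ, 0 ≤ n τ) {t : ℝ}
    (ht : 0 ≤ t) :
    |(∫ τ in (0 : ℝ)..t, n τ * birthDeathMoment β m (t - τ)) -
        m ! / (1 - β) ^ (m - 1) * ∫ τ in (0 : ℝ)..t, n τ * exp (m * (1 - β) * (t - τ))| ≤
      m ! / (1 - β) ^ (m - 1) * (m - 1) *
        ∫ τ in (0 : ℝ)..t, n τ * exp ((m - 1) * (1 - β) * (t - τ)) := by
  have hexp (c : ℝ) : IntervalIntegrable (fun τ => n τ * exp (c * (t - τ))) volume 0 t :=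
    ((hn.mono Set.Icc_subset_Ici_self).mul (by fun_prop)).intervalIntegrable_of_Icc ht
  rw [← intervalIntegral.integral_const_mul, ← intervalIntegral.integral_const_mul,
    ← intervalIntegral.integral_sub
      (intervalIntegrable_mul_birthDeathMoment hβ0 hβ1 hm hn hn0 ht)
      ((hexp (m * (1 - β))).const_mul (m ! / (1 - β) ^ (m - 1))),
    ← norm_eq_abs]
  refine intervalIntegral.norm_integral_le_of_norm_le ht ?_
    ((hexp ((m - 1) * (1 - β))).const_mul (m ! / (1 - β) ^ (m - 1) * (m - 1)))
  filter_upwards [Measure.ae_ne volume t] with τ hτt hτ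
  have hu : 0 < t - τ := sub_pos.2 (lt_of_le_of_ne hτ.2 hτt)
  rw [norm_eq_abs, ← mul_assoc, mul_comm _ (n τ), mul_assoc, ← mul_sub, abs_mul,
    abs_of_nonneg (hn0 τ)]
  exact (mul_le_mul_of_nonneg_left (abs_birthDeathMoment_sub_le hβ0 hβ1 hm hu) (hn0 τ)).trans_eq
    (by ring)

theorem integral_mul_exp_mul_sub (n : ℝ → ℝ) (c a b t : ℝ) :
    ∫ τ in a..b, n τ * exp (c * (t - τ)) = exp (c * t) * ∫ τ in a..b, n τ * exp (-c * τ) := by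
  rw [← intervalIntegral.integral_const_mul]
  congr 1 with τ
  rw [show c * (t - τ) = c * t + -c * τ by ring, exp_add]; ring

theorem abs_div_sub_le {x y d e c : ℝ} (hc : 0 < c) (hcy : c ≤ y) (h : |x - d * y| ≤ e) :
    |x / y - d| ≤ e / c := by
  have hy : 0 < y := hc.trans_le hcy
  rw [div_sub' hy.ne', abs_div, abs_of_pos hy, mul_comm y]
  exact div_le_div₀ ((abs_nonneg _).trans h) h hc hcy

theorem abs_div_integral_mul_birthDeathMoment_sub_le {β : ℝ} (hβ0 : 0 ≤ β) (hβ1 : β < 1)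
    {m : ℕ} (hm : m ≠ 0) {n : ℝ → ℝ} (hn : ContinuousOn n (Set.Ici 0)) (hn0 : ∀ τ, 0 ≤ n τ)
    {t : ℝ} (ht : 0 ≤ t) {c : ℝ} (hc : 0 < c)
    (hct : c ≤ ∫ τ in (0 : ℝ)..t, n τ * exp (-(m * (1 - β)) * τ)) :
    |(∫ τ in (0 : ℝ)..t, n τ * birthDeathMoment β m (t - τ)) /
        (∫ τ in (0 : ℝ)..t, n τ * exp (m * (1 - β) * (t - τ))) - m ! / (1 - β) ^ (m - 1)| ≤
      m ! / (1 - β) ^ (m - 1) * (m - 1) *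
        (∫ τ in (0 : ℝ)..t, n τ * exp (-((m - 1) * (1 - β)) * τ)) / c * exp (-(1 - β) * t) := by
  have herr := abs_integral_mul_birthDeathMoment_sub_le hβ0 hβ1 hm hn hn0 ht
  rw [integral_mul_exp_mul_sub, integral_mul_exp_mul_sub] at herr
  rw [integral_mul_exp_mul_sub]
  refine (abs_div_sub_le (by positivity) (mul_le_mul_of_nonneg_left hct (exp_pos _).le)
    herr).trans_eq ?_
  rw [show (m - 1) * (1 - β) * t = m * (1 - β) * t + -(1 - β) * t by ring, exp_add]
  field_simp

theorem isBigO_exp_of_tendsto_log_div {f : ℝ → ℝ} {δ ρ : ℝ}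
    (hf : Tendsto (fun t => log (f t) / t) atTop (nhds δ)) (hδρ : δ < ρ) :
    f =O[atTop] fun t => exp (ρ * t) := by
  refine IsBigO.of_bound 1 ?_
  filter_upwards [hf.eventually_lt_const hδρ, eventually_gt_atTop 0] with t hlog ht
  rw [one_mul, norm_of_nonneg (exp_pos _).le, norm_eq_abs]
  rcases eq_or_ne (f t) 0 with h | h
  · rw [h, abs_zero]; exact (exp_pos _).le
  · rw [← exp_log (abs_pos.2 h), log_abs]
    exact exp_le_exp.2 ((div_lt_iff₀ ht).1 hlog).le

theorem integrableOn_Ioi_mul_exp_neg {f : ℝ → ℝ} {ρ c : ℝ} (hf : ContinuousOn f (Set.Ici 0))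
    (hfρ : f =O[atTop] fun t => exp (ρ * t)) (hρc : ρ < c) :
    IntegrableOn (fun τ => f τ * exp (-c * τ)) (Set.Ioi 0) := by
  refine integrable_of_isBigO_exp_neg (sub_pos.2 hρc) (hf.mul (by fun_prop)) ?_
  refine (hfρ.mul (isBigO_refl (fun τ => exp (-c * τ)) atTop)).congr_right fun τ => ?_
  rw [← exp_add]; ring_nf

theorem intervalIntegral_le_integral_Ioi {f : ℝ → ℝ} {t : ℝ} (hf : IntegrableOn f (Set.Ioi 0))
    (hf0 : ∀ τ, 0 ≤ f τ) (ht : 0 ≤ t) : ∫ τ in (0 : ℝ)..t, f τ ≤ ∫ τ in Set.Ioi 0, f τ := by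
  rw [intervalIntegral.integral_of_le ht]
  exact setIntegral_mono_set hf (Eventually.of_forall hf0) Set.Ioc_subset_Ioi_self.eventuallyLE

namespace Assumption1

variable {n : ℝ → ℝ}

theorem nonneg (hn : Assumption1 n) (τ : ℝ) : 0 ≤ n τ := by
  obtain ⟨hzero, -, hright, hpos, -⟩ := hn
  rcases lt_trichotomy τ 0 with hτ | rfl | hτ
  · exact (hzero τ hτ).ge
  · exact ge_of_tendsto hright (eventually_nhdsWithin_of_forall fun τ hτ => (hpos τ hτ).le)
  · exact (hpos τ hτ).le

theorem continuousOn_Ici (hn : Assumption1 n) : ContinuousOn n (Set.Ici 0) := by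
  obtain ⟨-, hcont, hright, -⟩ := hn
  intro τ hτ
  rcases (Set.mem_Ici.1 hτ).eq_or_lt with rfl | hτ
  · rw [← Set.Ioi_insert, continuousWithinAt_insert_self]; exact hright
  · exact (hcont.continuousAt (Ioi_mem_nhds hτ)).continuousWithinAt

theorem intervalIntegrable_mul_exp (hn : Assumption1 n) (c : ℝ) {t : ℝ} (ht : 0 ≤ t) :
    IntervalIntegrable (fun τ => n τ * exp (c * τ)) volume 0 t :=
  ((hn.continuousOn_Ici.mul (by fun_prop)).mono Set.Icc_subset_Ici_self).intervalIntegrable_of_Icc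
    ht

theorem integral_mul_exp_pos (hn : Assumption1 n) (c : ℝ) {t : ℝ} (ht : 0 < t) :
    0 < ∫ τ in (0 : ℝ)..t, n τ * exp (c * τ) :=
  intervalIntegral_pos_of_pos_on (hn.intervalIntegrable_mul_exp c ht.le)
    (fun τ hτ => mul_pos (hn.2.2.2.1 τ hτ.1) (exp_pos _)) ht

theorem integral_pos (hn : Assumption1 n) {t : ℝ} (ht : 0 < t) : 0 < ∫ τ in (0 : ℝ)..t, n τ := by
  simpa using hn.integral_mul_exp_pos 0 ht

theorem integral_mul_exp_mono (hn : Assumption1 n) (c : ℝ) {s t : ℝ} (hs : 0 ≤ s)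
    (hst : s ≤ t) : ∫ τ in (0 : ℝ)..s, n τ * exp (c * τ) ≤ ∫ τ in (0 : ℝ)..t, n τ * exp (c * τ) :=
  intervalIntegral.integral_mono_interval le_rfl hs hst
    (Eventually.of_forall fun τ => mul_nonneg (hn.nonneg τ) (exp_pos _).le)
    (hn.intervalIntegrable_mul_exp c (hs.trans hst))

end Assumption1

/-- Error of the deterministic approximation for the `m`-th moment of the clone size:
if `δ* < (m−1)λ`, then `M^stoch(t)/M^det(t) − m!/λ^{m−1} = O(e^{−λt})` as `t → ∞`. -/
theorem stochastic_vs_deterministic_moments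
    (β : ℝ) (hβ : β ∈ Set.Ico (0 : ℝ) 1) (lam : ℝ) (hlam : lam = 1 - β)
    (m : ℕ) (hm : 2 ≤ m)
    (n : ℝ → ℝ) (hn : Assumption1 n) (δ : ℝ)
    (hδlim : Filter.Tendsto (fun t : ℝ => Real.log (n t) / t) Filter.atTop (nhds δ))
    (hδ : δ < (m - 1 : ℝ) * lam)
    (a Mstoch Mdet : ℝ → ℝ)
    (ha : ∀ t : ℝ, a t = ∫ τ in (0:ℝ)..t, n τ)
    (hMstoch : ∀ t : ℝ,
      Mstoch t = (1 / a t) * ∫ τ in (0:ℝ)..t, n τ * birthDeathMoment β m (t - τ))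
    (hMdet : ∀ t : ℝ,
      Mdet t = (1 / a t) * ∫ τ in (0:ℝ)..t, n τ * Real.exp ((m : ℝ) * lam * (t - τ))) :
    (fun t : ℝ => Mstoch t / Mdet t - (Nat.factorial m : ℝ) / lam ^ (m - 1))
      =O[Filter.atTop] (fun t : ℝ => Real.exp (-lam * t)) := by
  obtain ⟨hβ0, hβ1⟩ := hβ
  subst hlam
  have hm1 : (0 : ℝ) ≤ m - 1 := by
    have : (2 : ℝ) ≤ m := by exact_mod_cast hm
    linarith
  obtain ⟨ρ, hδρ, hρ⟩ := exists_between hδ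
  have hK := integrableOn_Ioi_mul_exp_neg hn.continuousOn_Ici
    (isBigO_exp_of_tendsto_log_div hδlim hδρ) hρ
  have hc₀ := hn.integral_mul_exp_pos (-(m * (1 - β))) one_pos
  refine IsBigO.of_bound (m ! / (1 - β) ^ (m - 1) * (m - 1) *
    (∫ τ in Set.Ioi 0, n τ * exp (-((m - 1) * (1 - β)) * τ)) /
      ∫ τ in (0 : ℝ)..1, n τ * exp (-(m * (1 - β)) * τ)) ?_
  filter_upwards [eventually_ge_atTop 1] with t ht
  have hat : a t ≠ 0 := (ha t ▸ hn.integral_pos (by linarith)).ne'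
  rw [hMstoch, hMdet, mul_div_mul_left _ _ (one_div_ne_zero hat), norm_eq_abs,
    norm_of_nonneg (exp_pos _).le]
  refine (abs_div_integral_mul_birthDeathMoment_sub_le hβ0 hβ1 (by omega) hn.continuousOn_Ici
    hn.nonneg (by linarith) hc₀
    (hn.integral_mul_exp_mono _ zero_le_one ht)).trans ?_
  gcongr
  exact intervalIntegral_le_integral_Ioi hK (fun τ => mul_nonneg (hn.nonneg τ) (exp_pos _).le)
    (by linarith)
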